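/- arXiv:math/0506221 — 2 statements merged into one kernel-verified Lean document; each statement's English description precedes it below -/
import Mathlib

section
/- If M ⊆ ℤ^m is a seminormal affine monoid, then gp(M) ∩ relint(cone(M)) ⊆ M. -/
/-!
Since `z ∈ gp(M)`, there is `q ∈ M` with `z + q ∈ M`. As `z` lies in the relative interior of the cone and `q` in its
linear span, `K z - q` lies in the real cone for some `K > 0`; an integral point of the real cone
has a positive multiple in `M` (pigeonhole on the fractional parts of its coefficients), so
`N z - q ∈ M` for some `N > 0`. Writing `k = uN + r` then puts `k z` in `M` for all `k ≥ N²`.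
Seminormality descends from all large multiples to `z` itself: if `k z ∈ M` for every `k > K`,
then `2K z, 3K z ∈ M` force `K z ∈ M`.
-/

noncomputable section

/-- The canonical embedding `ℤ^m → ℝ^m`. -/
def toR {m : ℕ} (x : Fin m → ℤ) : Fin m → ℝ := fun i => (x i : ℝ)

/-- The subgroup of `ℤ^m` generated by a submonoid `M`. -/
def gp {m : ℕ} (M : AddSubmonoid (Fin m → ℤ)) : AddSubgroup (Fin m → ℤ) :=
  AddSubgroup.closure (M : Set (Fin m → ℤ))

/-- The convex cone in `ℝ^m` generated by `M`: all nonnegative real combinations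
of elements of `M`. -/
def coneM {m : ℕ} (M : AddSubmonoid (Fin m → ℤ)) : Set (Fin m → ℝ) :=
  {x | ∃ (n : ℕ) (c : Fin n → ℝ) (v : Fin n → (Fin m → ℤ)),
    (∀ i, 0 ≤ c i) ∧ (∀ i, v i ∈ M) ∧ x = ∑ i, c i • toR (v i)}

/-- Faces of `coneM M`: the cone itself, or an intersection with a supporting
hyperplane given by a linear form nonnegative on the cone. -/
def IsFace {m : ℕ} (M : AddSubmonoid (Fin m → ℤ)) (F : Set (Fin m → ℝ)) : Prop :=
  F = coneM M ∨ ∃ α : (Fin m → ℝ) →ₗ[ℝ] ℝ,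
    (∀ x ∈ coneM M, 0 ≤ α x) ∧ F = {x ∈ coneM M | α x = 0}

/-- A facet: a maximal proper face. -/
def IsFacet {m : ℕ} (M : AddSubmonoid (Fin m → ℤ)) (F : Set (Fin m → ℝ)) : Prop :=
  IsFace M F ∧ F ≠ coneM M ∧ ∀ G, IsFace M G → F ⊆ G → G = F ∨ G = coneM M

/-- The subgroup `gp(M ∩ F)` of `ℤ^m` generated by the elements of `M` lying
in the face `F`. -/
def gpF {m : ℕ} (M : AddSubmonoid (Fin m → ℤ)) (F : Set (Fin m → ℝ)) :
    AddSubgroup (Fin m → ℤ) :=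
  AddSubgroup.closure {a : Fin m → ℤ | a ∈ M ∧ toR a ∈ F}

/-- `M` is seminormal: `z ∈ gp(M)`, `2z ∈ M`, `3z ∈ M` imply `z ∈ M`. -/
def Seminormal {m : ℕ} (M : AddSubmonoid (Fin m → ℤ)) : Prop :=
  ∀ z ∈ gp M, 2 • z ∈ M → 3 • z ∈ M → z ∈ M

/-- `M` is normal: `z ∈ gp(M)`, `kz ∈ M` for some `k ≥ 1` imply `z ∈ M`. -/
def IsNormal {m : ℕ} (M : AddSubmonoid (Fin m → ℤ)) : Prop :=
  ∀ z ∈ gp M, (∃ k : ℕ, 0 < k ∧ k • z ∈ M) → z ∈ M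

/-- `M` is positive: `0` is the only invertible element. -/
def Positive {m : ℕ} (M : AddSubmonoid (Fin m → ℤ)) : Prop :=
  ∀ a ∈ M, -a ∈ M → a = 0

/-- The localization monoid `M_F` of `M` at a face `F`:
elements `a ∈ gp(M)` with `a + b ∈ M` for some `b ∈ M ∩ F`. -/
def locM {m : ℕ} (M : AddSubmonoid (Fin m → ℤ)) (F : Set (Fin m → ℝ)) :
    Set (Fin m → ℤ) :=
  {a | a ∈ gp M ∧ ∃ b, b ∈ M ∧ toR b ∈ F ∧ a + b ∈ M}

open Filter Topology

section IntrinsicInterior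

variable {𝕜 E : Type*} [Ring 𝕜] [TopologicalSpace 𝕜] [AddCommGroup E] [Module 𝕜 E]
  [TopologicalSpace E] [ContinuousAdd E] [ContinuousSMul 𝕜 E]

theorem eventually_add_smul_mem_of_mem_intrinsicInterior {s : Set E} {x v : E}
    (hx : x ∈ intrinsicInterior 𝕜 s) (hv : v ∈ (affineSpan 𝕜 s).direction) :
    ∀ᶠ t : 𝕜 in 𝓝 0, x + t • v ∈ s := by
  obtain ⟨y, hy, rfl⟩ := mem_intrinsicInterior.1 hx
  let γ : 𝕜 → affineSpan 𝕜 s := fun t =>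
    ⟨t • v + (y : E), AffineSubspace.vadd_mem_of_mem_direction (Submodule.smul_mem _ t hv) y.2⟩
  have hγ0 : γ 0 = y := by ext; simp [γ]
  have hγ : Tendsto γ (𝓝 0) (𝓝 y) := hγ0 ▸ (by fun_prop : Continuous γ).tendsto 0
  filter_upwards [hγ (isOpen_interior.mem_nhds hy)] with t ht
  simpa [γ, add_comm] using interior_subset ht

end IntrinsicInterior

section Cone

variable {m : ℕ} {M : AddSubmonoid (Fin m → ℤ)}

theorem toR_mem_coneM {a : Fin m → ℤ} (ha : a ∈ M) : toR a ∈ coneM M :=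
  ⟨1, 1, fun _ => a, fun _ => zero_le_one, fun _ => ha, by simp⟩

theorem smul_mem_coneM {t : ℝ} (ht : 0 ≤ t) {x : Fin m → ℝ} (hx : x ∈ coneM M) :
    t • x ∈ coneM M := by
  obtain ⟨n, c, v, hc, hv, rfl⟩ := hx
  exact ⟨n, t • c, v, fun i => mul_nonneg ht (hc i), hv, by simp [Finset.smul_sum, smul_smul]⟩

theorem toR_mem_direction_affineSpan_coneM {a : Fin m → ℤ} (ha : a ∈ M) :
    toR a ∈ (affineSpan ℝ (coneM M)).direction := by
  have h0 : (0 : Fin m → ℝ) ∈ coneM M := by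
    simpa using smul_mem_coneM le_rfl (toR_mem_coneM ha)
  simpa using AffineSubspace.vsub_mem_direction
    (mem_affineSpan ℝ (toR_mem_coneM ha)) (mem_affineSpan ℝ h0)

theorem exists_nsmul_sub_mem_coneM {z q : Fin m → ℤ}
    (hz : toR z ∈ intrinsicInterior ℝ (coneM M)) (hq : q ∈ M) :
    ∃ K : ℕ, 0 < K ∧ toR (K • z - q) ∈ coneM M := by
  have hinv : Tendsto (fun K : ℕ => -(K : ℝ)⁻¹) atTop (𝓝 0) := by
    simpa using (tendsto_inv_atTop_nhds_zero_nat (𝕜 := ℝ)).neg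
  obtain ⟨K, hmem, hK⟩ := ((hinv.eventually (eventually_add_smul_mem_of_mem_intrinsicInterior hz
    (toR_mem_direction_affineSpan_coneM hq))).and (eventually_gt_atTop 0)).exists
  refine ⟨K, hK, ?_⟩
  convert smul_mem_coneM (Nat.cast_nonneg K) hmem using 1
  have : (K : ℝ) ≠ 0 := by positivity
  funext j
  simp only [toR, Pi.sub_apply, Pi.smul_apply, Pi.add_apply, nsmul_eq_mul,
    Pi.mul_apply, Pi.natCast_apply, smul_eq_mul]
  push_cast
  field_simp
  ring

end Cone

section Rational

variable {m : ℕ}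

theorem norm_toR (x : Fin m → ℤ) : ‖toR x‖ = ‖x‖ := by
  simp only [Pi.norm_def, toR]
  congr 2

theorem toR_nsmul_sub_sum_floor_smul {n : ℕ} {y : Fin m → ℤ} {c : Fin n → ℝ}
    {v : Fin n → Fin m → ℤ} (hy : toR y = ∑ i, c i • toR (v i)) (N : ℕ) :
    toR ((N : ℤ) • y - ∑ i, ⌊N * c i⌋ • v i) = ∑ i, Int.fract (N * c i) • toR (v i) := by
  funext j
  have hyj := congrFun hy j
  simp only [toR, Finset.sum_apply, Pi.smul_apply, Pi.sub_apply, smul_eq_mul] at hyj ⊢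
  push_cast
  rw [hyj, Finset.mul_sum, ← Finset.sum_sub_distrib]
  congr 1; ext i; rw [Int.fract]; ring

theorem exists_nsmul_mem_of_toR_mem_coneM {M : AddSubmonoid (Fin m → ℤ)} {y : Fin m → ℤ}
    (hy : toR y ∈ coneM M) : ∃ D : ℕ, 0 < D ∧ D • y ∈ M := by
  obtain ⟨n, c, v, hc, hv, hy⟩ := hy
  set r : ℕ → Fin m → ℤ := fun N => (N : ℤ) • y - ∑ i, ⌊N * c i⌋ • v i with hr
  have hbound : ∀ N, r N ∈ Metric.closedBall 0 (∑ i, ‖v i‖) := by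
    intro N
    rw [mem_closedBall_zero_iff, ← norm_toR, hr, toR_nsmul_sub_sum_floor_smul hy]
    refine (norm_sum_le _ _).trans (Finset.sum_le_sum fun i _ => ?_)
    rw [norm_smul, norm_toR, Real.norm_of_nonneg (Int.fract_nonneg _)]
    exact mul_le_of_le_one_left (norm_nonneg _) (Int.fract_lt_one _).le
  obtain ⟨N₁, -, N₂, -, hlt, heq⟩ := Set.infinite_univ.exists_lt_map_eq_of_mapsTo
    (fun N _ => hbound N) (isCompact_closedBall _ _).finite_of_discrete
  have hfloor : ∀ i, ⌊N₁ * c i⌋ ≤ ⌊N₂ * c i⌋ := fun i =>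
    Int.floor_mono (mul_le_mul_of_nonneg_right (by exact_mod_cast hlt.le) (hc i))
  refine ⟨N₂ - N₁, by omega, ?_⟩
  have hdiff : ((N₂ - N₁ : ℕ) : ℤ) • y = ∑ i, (⌊N₂ * c i⌋ - ⌊N₁ * c i⌋) • v i := by
    simp only [hr] at heq
    rw [Nat.cast_sub hlt.le]
    simp only [sub_smul, Finset.sum_sub_distrib]
    linear_combination (norm := module) -heq
  rw [← natCast_zsmul, hdiff]
  refine AddSubmonoid.sum_mem _ fun i _ => ?_
  obtain ⟨k, hk⟩ := Int.eq_ofNat_of_zero_le (sub_nonneg.2 (hfloor i))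
  rw [hk, natCast_zsmul]
  exact AddSubmonoid.nsmul_mem _ (hv i) k

end Rational

section Multiples

variable {G : Type*} [AddCommGroup G] {M : AddSubmonoid G}

theorem exists_add_mem_of_mem_closure {z : G} (hz : z ∈ AddSubgroup.closure (M : Set G)) :
    ∃ q ∈ M, z + q ∈ M := by
  induction hz using AddSubgroup.closure_induction with
  | mem x hx => exact ⟨0, M.zero_mem, by simpa using hx⟩
  | zero => exact ⟨0, M.zero_mem, by simp⟩
  | add x y _ _ hx hy =>
    obtain ⟨q, hq, hxq⟩ := hx
    obtain ⟨q', hq', hyq'⟩ := hy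
    exact ⟨q + q', M.add_mem hq hq', by simpa [add_add_add_comm] using M.add_mem hxq hyq'⟩
  | neg x _ hx =>
    obtain ⟨q, hq, hxq⟩ := hx
    exact ⟨x + q, hxq, by simpa using hq⟩

theorem eventually_nsmul_mem_of_nsmul_sub_mem {z q : G} {N : ℕ} (hq : q ∈ M) (hzq : z + q ∈ M)
    (hN₀ : 0 < N) (hN : N • z - q ∈ M) : ∀ᶠ k : ℕ in atTop, k • z ∈ M := by
  filter_upwards [eventually_ge_atTop (N * N)] with k hk
  obtain ⟨w, hw⟩ : ∃ w, k / N = k % N + w := by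
    have hmod := Nat.mod_lt k hN₀
    have hdiv : N ≤ k / N := (Nat.le_div_iff_mul_le hN₀).2 hk
    exact ⟨k / N - k % N, by omega⟩
  have hkz : k • z = (k % N + w) • (N • z - q) + w • q + (k % N) • (z + q) := by
    conv_lhs => rw [← Nat.div_add_mod k N, hw]
    module
  rw [hkz]
  exact M.add_mem (M.add_mem (M.nsmul_mem hN _) (M.nsmul_mem hq _)) (M.nsmul_mem hzq _)

end Multiples

theorem Seminormal.mem_of_eventually_nsmul_mem {m : ℕ} {M : AddSubmonoid (Fin m → ℤ)}
    (hsn : Seminormal M) {z : Fin m → ℤ} (hz : z ∈ gp M) (h : ∀ᶠ k : ℕ in atTop, k • z ∈ M) :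
    z ∈ M := by
  obtain ⟨K, hK⟩ := eventually_atTop.1 h
  suffices ∀ K : ℕ, (∀ k, K < k → k • z ∈ M) → z ∈ M from this K fun k hk => hK k hk.le
  intro K
  induction K with
  | zero => exact fun hlarge => by simpa using hlarge 1 one_pos
  | succ K ih =>
    refine fun hlarge => ih fun k hk => ?_
    rcases (Nat.succ_le_of_lt hk).eq_or_lt with rfl | hk'
    · refine hsn _ ((gp M).nsmul_mem hz _) ?_ ?_ <;> rw [smul_smul] <;> exact hlarge _ (by omega)
    · exact hlarge k hk'

theorem gp_inter_relint_subset_general {m : ℕ} (M : AddSubmonoid (Fin m → ℤ))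
    (hsn : Seminormal M) :
    ∀ z ∈ gp M, toR z ∈ intrinsicInterior ℝ (coneM M) → z ∈ M := by
  intro z hz hrel
  obtain ⟨q, hq, hzq⟩ := exists_add_mem_of_mem_closure hz
  obtain ⟨K, hK, hKcone⟩ := exists_nsmul_sub_mem_coneM hrel hq
  obtain ⟨D, hD, hDmem⟩ := exists_nsmul_mem_of_toR_mem_coneM hKcone
  have hN : (D * K) • z - q ∈ M := by
    obtain ⟨D, rfl⟩ : ∃ D', D = D' + 1 := ⟨D - 1, by omega⟩
    convert M.add_mem hDmem (M.nsmul_mem hq D) using 1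
    module
  exact hsn.mem_of_eventually_nsmul_mem hz
    (eventually_nsmul_mem_of_nsmul_sub_mem hq hzq (by positivity) hN)

/-- If `M` is a seminormal affine monoid, then
`gp(M) ∩ relint(cone(M)) ⊆ M`. -/
theorem gp_inter_relint_subset {m : ℕ} (M : AddSubmonoid (Fin m → ℤ)) (hFG : M.FG)
    (hsn : Seminormal M) :
    ∀ z ∈ gp M, toR z ∈ intrinsicInterior ℝ (coneM M) → z ∈ M :=
  gp_inter_relint_subset_general M hsn
end
end

section
/- Let M ⊆ ℤ^m be an affine monoid with facets F₁,…,F_t of cone(M), M_i = { a ∈ gp(M) : a + b ∈ M for some b ∈ M ∩ F_i }, and M' = ⋂_{i=1}^t M_i. Then (M')' = M', i.e., the operation M ↦ M' is idempotent. -/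
noncomputable section

/-- The subgroup generated by a set `S ⊆ ℤ^m`. -/
def gpS {m : ℕ} (S : Set (Fin m → ℤ)) : AddSubgroup (Fin m → ℤ) :=
  AddSubgroup.closure S

/-- The convex cone generated by a set `S ⊆ ℤ^m`. -/
def coneS {m : ℕ} (S : Set (Fin m → ℤ)) : Set (Fin m → ℝ) :=
  {x | ∃ (n : ℕ) (c : Fin n → ℝ) (v : Fin n → (Fin m → ℤ)),
    (∀ i, 0 ≤ c i) ∧ (∀ i, v i ∈ S) ∧ x = ∑ i, c i • toR (v i)}

/-- Faces of the cone generated by `S`. -/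
def IsFaceS {m : ℕ} (S : Set (Fin m → ℤ)) (F : Set (Fin m → ℝ)) : Prop :=
  F = coneS S ∨ ∃ α : (Fin m → ℝ) →ₗ[ℝ] ℝ,
    (∀ x ∈ coneS S, 0 ≤ α x) ∧ F = {x ∈ coneS S | α x = 0}

/-- Facets of the cone generated by `S`. -/
def IsFacetS {m : ℕ} (S : Set (Fin m → ℤ)) (F : Set (Fin m → ℝ)) : Prop :=
  IsFaceS S F ∧ F ≠ coneS S ∧ ∀ G, IsFaceS S G → F ⊆ G → G = F ∨ G = coneS S

/-- The `(S_2)`-ification `S' = ⋂_i S_i`, where `S_i` is the localization of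
`S` at the `i`-th facet of its cone. -/
def primeS {m : ℕ} (S : Set (Fin m → ℤ)) : Set (Fin m → ℤ) :=
  {a | a ∈ gpS S ∧ ∀ F : Set (Fin m → ℝ), IsFacetS S F →
    ∃ b ∈ S, toR b ∈ F ∧ a + b ∈ S}

/-!
`M ⊆ M'` because `0` lies on every facet. The point is that `cone(M') = cone(M)`, so that `M`
and `M'` have the same facets: `cone(M)` is polyhedral (Fourier–Motzkin elimination), and an
element of `gp(M)` outside it violates the inequality of some facet `F`, which adding an element
of `M ∩ F` cannot repair. Then for `a ∈ M''` and a facet `F`, take `b ∈ M' ∩ F` with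
`a + b ∈ M'`, and `c, d ∈ M ∩ F` with `b + c ∈ M`, `a + b + d ∈ M`: the element `b + c + d`
lies in `M ∩ F` and `a + (b + c + d) ∈ M`.
-/

open Module Submodule

namespace PointedCone

variable {E : Type*} [AddCommGroup E] [Module ℝ E]

lemma mem_dual_id {s : Set (Dual ℝ E)} {y : E} :
    y ∈ dual .id s ↔ ∀ f ∈ s, 0 ≤ f y := .rfl

/-- Fourier–Motzkin elimination: the halfspaces of `C ⊔ hull {w}` are those of `C` that are
nonnegative at `w`, together with the combinations `g w • f - f w • g` of pairs with
`f w < 0 < g w`, which eliminate the direction `w`. -/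
lemma DualFG.sup_hull_singleton {C : PointedCone ℝ E} (hC : C.DualFG .id) (w : E) :
    (C ⊔ hull ℝ {w}).DualFG .id := by
  classical
  obtain ⟨s, rfl⟩ := hC
  set neg := s.filter (fun f => f w < 0)
  set pos := s.filter (fun f => 0 < f w)
  refine ⟨s.filter (fun f => 0 ≤ f w) ∪
    (neg ×ˢ pos).image (fun fg => fg.2 w • fg.1 - fg.1 w • fg.2), le_antisymm ?_ ?_⟩
  · intro y hy
    simp only [Finset.coe_union, Finset.coe_filter, Finset.coe_image, mem_dual_id,
      Set.mem_union, Set.mem_ofPred_eq, Set.mem_image, Finset.mem_coe, Finset.mem_product] at hy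
    have hneg := fun f (hf : f ∈ neg) => Finset.mem_filter.1 hf
    have hpos := fun f (hf : f ∈ pos) => Finset.mem_filter.1 hf
    let t := (insert 0 (neg.image fun f => f y / f w)).max' (Finset.insert_nonempty _ _)
    have ht_lower : ∀ f ∈ neg, t * f w ≤ f y := fun f hf =>
      (div_le_iff_of_neg (hneg f hf).2).1
        (Finset.le_max' _ _ (by simp [Finset.mem_image_of_mem _ hf]))
    have ht_upper : ∀ g ∈ pos, t * g w ≤ g y := by
      intro g hg
      rw [← le_div_iff₀ (hpos g hg).2]
      refine Finset.max'_le _ _ _ (fun r hr => ?_)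
      rcases Finset.mem_insert.1 hr with rfl | hr
      · exact div_nonneg (hy g (Or.inl ⟨(hpos g hg).1, (hpos g hg).2.le⟩)) (hpos g hg).2.le
      obtain ⟨f, hf, rfl⟩ := Finset.mem_image.1 hr
      have hfg := hy _ (Or.inr ⟨(f, g), ⟨hf, hg⟩, rfl⟩)
      simp only [LinearMap.sub_apply, LinearMap.smul_apply, smul_eq_mul] at hfg
      rw [← neg_div_neg_eq, div_le_div_iff₀ (neg_pos.2 (hneg f hf).2) (hpos g hg).2]
      nlinarith
    have ht0 : 0 ≤ t := Finset.le_max' _ _ (Finset.mem_insert_self _ _)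
    refine mem_sup.2 ⟨y - t • w, ?_, t • w, ?_, sub_add_cancel _ _⟩
    · rw [mem_dual_id]
      intro f hf
      simp only [map_sub, map_smul, smul_eq_mul, sub_nonneg]
      rcases lt_trichotomy (f w) 0 with h | h | h
      · exact ht_lower f (Finset.mem_filter.2 ⟨hf, h⟩)
      · rw [h, mul_zero]; exact hy f (Or.inl ⟨hf, h.ge⟩)
      · exact ht_upper f (Finset.mem_filter.2 ⟨hf, h⟩)
    · exact mem_span_singleton.2 ⟨⟨t, ht0⟩, rfl⟩
  · refine sup_le (fun y hy => ?_) (span_le.2 (Set.singleton_subset_iff.2 ?_)) <;>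
      simp only [Finset.coe_union, Finset.coe_filter, Finset.coe_image, SetLike.mem_coe,
        mem_dual_id, Set.mem_union, Set.mem_ofPred_eq, Set.mem_image, Finset.mem_product]
    · rw [mem_dual_id] at hy
      rintro _ (⟨hf, -⟩ | ⟨⟨f, g⟩, ⟨hf, hg⟩, rfl⟩)
      · exact hy _ hf
      simp only [LinearMap.sub_apply, LinearMap.smul_apply, smul_eq_mul]
      obtain ⟨hfs, hfw⟩ := Finset.mem_filter.1 hf
      obtain ⟨hgs, hgw⟩ := Finset.mem_filter.1 hg
      nlinarith [hy f hfs, hy g hgs]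
    · rintro _ (⟨-, hf⟩ | ⟨⟨f, g⟩, -, rfl⟩)
      · exact hf
      simp [mul_comm]

lemma DualFG.bot [FiniteDimensional ℝ E] : (⊥ : PointedCone ℝ E).DualFG .id := by
  classical
  let b := finBasis ℝ E
  refine ⟨Finset.univ.image b.coord ∪ Finset.univ.image (fun i => -b.coord i), ?_⟩
  ext y
  simp only [mem_dual_id, Finset.coe_union, Finset.coe_image, Finset.coe_univ, Set.image_univ,
    Set.mem_union, Set.mem_range, mem_bot]
  refine ⟨fun hy => b.forall_coord_eq_zero_iff.1 fun i => ?_, ?_⟩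
  · have := hy _ (Or.inr ⟨i, rfl⟩)
    simp only [LinearMap.neg_apply, Left.nonneg_neg_iff] at this
    exact le_antisymm this (hy _ (Or.inl ⟨i, rfl⟩))
  · rintro rfl f -
    simp

lemma FG.dualFG [FiniteDimensional ℝ E] {C : PointedCone ℝ E} (hC : C.FG) : C.DualFG .id := by
  classical
  obtain ⟨s, rfl⟩ := hC
  induction s using Finset.induction_on with
  | empty => simpa using DualFG.bot
  | insert w s _ ih =>
    rw [Finset.coe_insert, span_insert, sup_comm]
    exact ih.sup_hull_singleton w

lemma exists_irredundant_subset (s : Finset (Dual ℝ E)) :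
    ∃ t ⊆ s, dual .id (t : Set (Dual ℝ E)) = dual .id (s : Set (Dual ℝ E)) ∧
      ∀ f ∈ t, ∃ y, (∀ g ∈ t, g ≠ f → 0 ≤ g y) ∧ f y < 0 := by
  classical
  induction s using Finset.strongInduction with
  | H s ih =>
    by_cases hirr : ∀ f ∈ s, ∃ y, (∀ g ∈ s, g ≠ f → 0 ≤ g y) ∧ f y < 0
    · exact ⟨s, subset_rfl, rfl, hirr⟩
    push Not at hirr
    obtain ⟨f, hf, hred⟩ := hirr
    obtain ⟨t, hts, hdual, ht⟩ := ih _ (Finset.erase_ssubset hf)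
    refine ⟨t, hts.trans (Finset.erase_subset _ _), hdual.trans ?_, ht⟩
    ext y
    simp only [mem_dual_id, Finset.mem_coe]
    refine ⟨fun hy g hg => ?_, fun hy g hg => hy g (Finset.mem_of_mem_erase hg)⟩
    by_cases hgf : g = f
    · exact hgf ▸ hred y fun g' hg' hg'f => hy g' (Finset.mem_erase.2 ⟨hg'f, hg'⟩)
    · exact hy g (Finset.mem_erase.2 ⟨hgf, hg⟩)

/-- An irredundant inequality `A ∈ s` of the cone `dual s` cuts out a maximal proper face: a
functional `β` vanishing on that face vanishes on all of the cone, or on no more of it. -/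
lemma eq_zero_of_irredundant {s : Finset (Dual ℝ E)} {A : Dual ℝ E} (hA : A ∈ s) {yA : E}
    (hyA : ∀ g ∈ s, g ≠ A → 0 ≤ g yA) (hAyA : A yA < 0) {β : Dual ℝ E}
    (hAβ : ∀ y ∈ dual .id (s : Set (Dual ℝ E)), A y = 0 → β y = 0)
    {p : E} (hp : p ∈ dual .id (s : Set (Dual ℝ E))) (hβp : β p ≠ 0)
    {z : E} (hz : z ∈ dual .id (s : Set (Dual ℝ E))) (hβz : β z = 0) : A z = 0 := by
  -- moving `u` towards `yA` until it hits the hyperplane `A = 0` stays inside the cone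
  have key : ∀ u ∈ dual .id (s : Set (Dual ℝ E)), -A yA * β u + A u * β yA = 0 := by
    intro u hu
    have hmem : (-A yA) • u + A u • yA ∈ dual .id (s : Set (Dual ℝ E)) := by
      rw [mem_dual_id] at hu ⊢
      intro g hg
      simp only [map_add, map_smul, smul_eq_mul]
      by_cases hgA : g = A
      · subst hgA; nlinarith
      · nlinarith [hu g hg, hyA g hg hgA, hu A hA]
    have := hAβ _ hmem (by simp only [map_add, map_smul, smul_eq_mul]; ring)
    simpa only [map_add, map_smul, smul_eq_mul] using this
  by_contra hAz
  have hβyA : β yA = 0 := by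
    have := key z hz
    rw [hβz, mul_zero, zero_add] at this
    exact (mul_eq_zero.1 this).resolve_left hAz
  have := key p hp
  rw [hβyA, mul_zero, add_zero] at this
  exact hβp ((mul_eq_zero.1 this).resolve_left (by linarith))

/-- The last two conjuncts say that `C ∩ ker A` is a facet of `C`. -/
lemma DualFG.exists_facet_functional {C : PointedCone ℝ E} (hC : C.DualFG .id) {x : E}
    (hx : x ∈ span ℝ (C : Set E)) (hxC : x ∉ C) :
    ∃ A : Dual ℝ E, (∀ y ∈ C, 0 ≤ A y) ∧ A x < 0 ∧ (∃ y ∈ C, A y ≠ 0) ∧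
      ∀ β : Dual ℝ E, (∀ y ∈ C, A y = 0 → β y = 0) →
        (∃ y ∈ C, β y ≠ 0) → ∀ y ∈ C, β y = 0 → A y = 0 := by
  obtain ⟨s, rfl⟩ := hC
  obtain ⟨t, -, hts, hirr⟩ := exists_irredundant_subset s
  rw [← hts] at hx hxC ⊢
  obtain ⟨A, hA, hAx⟩ : ∃ A ∈ t, A x < 0 := by
    by_contra! h
    exact hxC fun f hf => h f hf
  refine ⟨A, fun y hy => hy hA, hAx, ?_, fun β hAβ ⟨p, hp, hβp⟩ z hz hβz => ?_⟩
  · by_contra! h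
    have : span ℝ (dual .id (t : Set (Dual ℝ E)) : Set E) ≤ LinearMap.ker A :=
      span_le.2 fun y hy => h y hy
    exact hAx.ne (this hx)
  · obtain ⟨yA, hyA, hAyA⟩ := hirr A hA
    exact eq_zero_of_irredundant hA hyA hAyA hAβ hp hβp hz hβz

end PointedCone

open PointedCone

section Monoid

variable {m : ℕ}

def toRHom (m : ℕ) : (Fin m → ℤ) →+ (Fin m → ℝ) := (Int.castAddHom ℝ).compLeft (Fin m)

lemma toR_add (a b : Fin m → ℤ) : toR (a + b) = toR a + toR b := map_add (toRHom m) a b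

lemma toR_zero : toR (0 : Fin m → ℤ) = 0 := map_zero (toRHom m)

lemma coneS_eq_hull (S : Set (Fin m → ℤ)) : coneS S = hull ℝ (toR '' S) := by
  ext x
  rw [SetLike.mem_coe, mem_span_set']
  constructor
  · rintro ⟨n, c, v, hc, hv, rfl⟩
    refine ⟨n, fun i => ⟨c i, hc i⟩, fun i => ⟨toR (v i), v i, hv i, rfl⟩, ?_⟩
    simp only [Nonneg.mk_smul]
  · rintro ⟨n, c, g, rfl⟩
    choose v hv hvg using fun i => (g i).2
    exact ⟨n, fun i => c i, v, fun i => (c i).2, hv, by simp only [hvg, Nonneg.coe_smul]⟩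

lemma add_mem_coneS {S : Set (Fin m → ℤ)} {x y : Fin m → ℝ} (hx : x ∈ coneS S)
    (hy : y ∈ coneS S) : x + y ∈ coneS S := by
  rw [coneS_eq_hull] at *
  exact add_mem hx hy

lemma toR_mem_coneS {S : Set (Fin m → ℤ)} {a : Fin m → ℤ} (ha : a ∈ S) : toR a ∈ coneS S := by
  rw [coneS_eq_hull]
  exact subset_hull (Set.mem_image_of_mem _ ha)

lemma fg_hull_toR {M : AddSubmonoid (Fin m → ℤ)} (hM : M.FG) :
    (hull ℝ (toR '' (M : Set (Fin m → ℤ)))).FG := by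
  obtain ⟨T, rfl⟩ := hM
  have : toR '' (AddSubmonoid.closure (T : Set (Fin m → ℤ)) : Set (Fin m → ℤ)) =
      (AddSubmonoid.closure (toR '' (T : Set (Fin m → ℤ))) : Set (Fin m → ℝ)) :=
    congrArg SetLike.coe (AddMonoidHom.map_mclosure (toRHom m) (T : Set (Fin m → ℤ)))
  rw [this, hull, span_closure]
  exact fg_span (T.finite_toSet.image _)

lemma toR_mem_span_hull_of_mem_gpS {S : Set (Fin m → ℤ)} {a : Fin m → ℤ} (ha : a ∈ gpS S) :
    toR a ∈ Submodule.span ℝ (hull ℝ (toR '' S) : Set (Fin m → ℝ)) := by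
  rw [Submodule.span_span_of_tower]
  have : (gpS S).map (toRHom m) ≤ (Submodule.span ℝ (toR '' S)).toAddSubgroup := by
    rw [gpS, AddMonoidHom.map_closure]
    exact (AddSubgroup.closure_le _).2 Submodule.subset_span
  exact this ⟨a, ha, rfl⟩

lemma zero_mem_coneS (S : Set (Fin m → ℤ)) : (0 : Fin m → ℝ) ∈ coneS S := by
  rw [coneS_eq_hull]
  exact zero_mem _

lemma zero_mem_of_isFacetS {S : Set (Fin m → ℤ)} {F : Set (Fin m → ℝ)} (hF : IsFacetS S F) :
    (0 : Fin m → ℝ) ∈ F := by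
  obtain ⟨h | ⟨α, -, rfl⟩, hne, -⟩ := hF
  · exact absurd h hne
  · exact ⟨zero_mem_coneS S, map_zero α⟩

lemma IsFaceS.add_mem {S : Set (Fin m → ℤ)} {F : Set (Fin m → ℝ)} (hF : IsFaceS S F)
    {x y : Fin m → ℝ} (hx : x ∈ F) (hy : y ∈ F) : x + y ∈ F := by
  rcases hF with rfl | ⟨α, -, rfl⟩
  · exact add_mem_coneS hx hy
  · exact ⟨add_mem_coneS hx.1 hy.1, by rw [map_add, hx.2, hy.2, add_zero]⟩

lemma isFacetS_congr {S T : Set (Fin m → ℤ)} (h : coneS S = coneS T) {F : Set (Fin m → ℝ)} :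
    IsFacetS S F ↔ IsFacetS T F := by
  simp only [IsFacetS, IsFaceS, h]

lemma isFacetS_of_facet_functional {S : Set (Fin m → ℤ)} {A : Dual ℝ (Fin m → ℝ)}
    (hA : ∀ y ∈ hull ℝ (toR '' S), 0 ≤ A y) (hproper : ∃ y ∈ hull ℝ (toR '' S), A y ≠ 0)
    (hmax : ∀ β : Dual ℝ (Fin m → ℝ), (∀ y ∈ hull ℝ (toR '' S), A y = 0 → β y = 0) →
      (∃ y ∈ hull ℝ (toR '' S), β y ≠ 0) → ∀ y ∈ hull ℝ (toR '' S), β y = 0 → A y = 0) :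
    IsFacetS S {y ∈ coneS S | A y = 0} := by
  simp only [IsFacetS, IsFaceS, coneS_eq_hull, SetLike.mem_coe]
  refine ⟨Or.inr ⟨A, hA, rfl⟩, fun h => ?_, ?_⟩
  · obtain ⟨y, hy, hAy⟩ := hproper
    exact hAy (h.symm ▸ hy : y ∈ {y | y ∈ hull ℝ (toR '' S) ∧ A y = 0}).2
  rintro G (rfl | ⟨β, -, rfl⟩) hAG
  · exact Or.inr rfl
  by_cases hβ : ∃ y ∈ hull ℝ (toR '' S), β y ≠ 0
  · refine Or.inl (subset_antisymm (fun y hy => ⟨hy.1, hmax β ?_ hβ y hy.1 hy.2⟩) hAG)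
    exact fun y hy hAy => (hAG ⟨hy, hAy⟩).2
  · push Not at hβ
    exact Or.inr (Set.sep_eq_self_iff_mem_true.2 hβ)

lemma subset_primeS {S : Set (Fin m → ℤ)} (h0 : (0 : Fin m → ℤ) ∈ S) : S ⊆ primeS S :=
  fun a ha => ⟨AddSubgroup.subset_closure ha, fun F hF =>
    ⟨0, h0, toR_zero ▸ zero_mem_of_isFacetS hF, by rwa [add_zero]⟩⟩

lemma gpS_primeS_le (S : Set (Fin m → ℤ)) : gpS (primeS S) ≤ gpS S :=
  (AddSubgroup.closure_le _).2 fun _ ha => ha.1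

lemma toR_mem_coneS_of_mem_primeS {S : Set (Fin m → ℤ)} (hS : (hull ℝ (toR '' S)).FG)
    {a : Fin m → ℤ} (ha : a ∈ primeS S) : toR a ∈ coneS S := by
  rw [coneS_eq_hull]
  by_contra hx
  obtain ⟨A, hA, hAa, hproper, hmax⟩ :=
    (PointedCone.FG.dualFG hS).exists_facet_functional (toR_mem_span_hull_of_mem_gpS ha.1) hx
  obtain ⟨b, hbS, hbF, habS⟩ := ha.2 _ (isFacetS_of_facet_functional hA hproper hmax)
  have hAab := hA _ (coneS_eq_hull S ▸ toR_mem_coneS habS)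
  rw [toR_add, map_add, hbF.2, add_zero] at hAab
  exact hAab.not_gt hAa

lemma coneS_primeS {S : Set (Fin m → ℤ)} (h0 : (0 : Fin m → ℤ) ∈ S)
    (hS : (hull ℝ (toR '' S)).FG) : coneS (primeS S) = coneS S := by
  rw [coneS_eq_hull, coneS_eq_hull]
  refine congrArg _ (le_antisymm (span_le.2 ?_) (span_mono (Set.image_mono (subset_primeS h0))))
  rintro _ ⟨a, ha, rfl⟩
  rw [SetLike.mem_coe, ← SetLike.mem_coe, ← coneS_eq_hull]
  exact toR_mem_coneS_of_mem_primeS hS ha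

lemma primeS_primeS_subset (M : AddSubmonoid (Fin m → ℤ))
    (hcone : coneS (primeS (M : Set (Fin m → ℤ))) = coneS M) :
    primeS (primeS (M : Set (Fin m → ℤ))) ⊆ primeS M := by
  rintro a ⟨ha, hfacets⟩
  refine ⟨gpS_primeS_le _ ha, fun F hF => ?_⟩
  obtain ⟨b, ⟨-, hb⟩, hbF, hab⟩ := hfacets F ((isFacetS_congr hcone).2 hF)
  obtain ⟨c, hcM, hcF, hbcM⟩ := hb F hF
  obtain ⟨d, hdM, hdF, habdM⟩ := hab.2 F hF
  refine ⟨b + c + d, M.add_mem hbcM hdM, ?_, ?_⟩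
  · rw [toR_add, toR_add]
    exact hF.1.add_mem (hF.1.add_mem hbF hcF) hdF
  · rw [show a + (b + c + d) = a + b + d + c by abel]
    exact M.add_mem habdM hcM

end Monoid

/-- The operation `M ↦ M'` is idempotent: `(M')' = M'`. -/
theorem primeS_idem {m : ℕ} (M : AddSubmonoid (Fin m → ℤ)) (hFG : M.FG) :
    primeS (primeS (M : Set (Fin m → ℤ))) = primeS (M : Set (Fin m → ℤ)) := by
  have hcone := coneS_primeS M.zero_mem (fg_hull_toR hFG)
  exact (primeS_primeS_subset M hcone).antisymm
    (subset_primeS (subset_primeS M.zero_mem M.zero_mem))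
end
end
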